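/- Let G = (C, E) be a complete tournament with |C| = m candidates and let w ∈ UC(G) be an uncovered-set winner of G. Then every smallest minimal support X for w ∈ UC(G) has exactly m − 1 edges. -/

import Mathlib

/-- `E` is the edge set of a complete (unweighted) tournament on `C`:
asymmetric and total on distinct candidates. -/
def IsCompleteT {C : Type*} (E : Finset (C × C)) : Prop :=
  (∀ x y : C, (x, y) ∈ E → (y, x) ∉ E) ∧
  (∀ x y : C, x ≠ y → (x, y) ∈ E ∨ (y, x) ∈ E)

/-- `a` reaches `b` via a directed path of length at most two. -/
def Reach2 {C : Type*} (E : Finset (C × C)) (a b : C) : Prop :=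
  a = b ∨ (a, b) ∈ E ∨ ∃ z : C, (a, z) ∈ E ∧ (z, b) ∈ E

/-- Membership in the uncovered set. -/
def InUC {C : Type*} (E : Finset (C × C)) (c : C) : Prop :=
  ∀ c' : C, Reach2 E c c'

/-- `w` is a necessary winner of UC in the partial tournament `X`. -/
def NWUC {C : Type*} (X : Finset (C × C)) (w : C) : Prop :=
  ∀ E' : Finset (C × C), X ⊆ E' → IsCompleteT E' → InUC E' w

/-- `X` is a minimal support for `w ∈ UC(G)`. -/
def MSUC {C : Type*} (G X : Finset (C × C)) (w : C) : Prop :=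
  X ⊆ G ∧ NWUC X w ∧ ∀ Y : Finset (C × C), Y ⊂ X → ¬ NWUC Y w

/-- `X` is a smallest minimal support for `w ∈ UC(G)`. -/
def SMSUC {C : Type*} (G X : Finset (C × C)) (w : C) : Prop :=
  MSUC G X w ∧ ∀ Y : Finset (C × C), MSUC G Y w → X.card ≤ Y.card


/-!
If `v ≠ w` has no in-edge in `X`, complete `X` along a linear order in which `v` comes first:
then `v` is a source of the completion, so `w` cannot reach it. Hence every necessary-winner
support has an in-edge at each of the `m - 1` other candidates. Conversely, sending each `v ≠ w`
either the edge `w → v` of `G` or a path `w → z → v` of `G` gives a tree of depth two rooted at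
`w` with `m - 1` edges that makes `w` uncovered in every extension; a minimal support inside
it is no larger.
-/

open Finset Function

section

variable {C : Type*}

lemma Reach2.mono {E E' : Finset (C × C)} (hEE' : E ⊆ E') {a b : C} (h : Reach2 E a b) :
    Reach2 E' a b := by
  rcases h with rfl | hab | ⟨z, haz, hzb⟩
  · exact Or.inl rfl
  · exact Or.inr (Or.inl (hEE' hab))
  · exact Or.inr (Or.inr ⟨z, hEE' haz, hEE' hzb⟩)

lemma InUC.nwuc {X : Finset (C × C)} {w : C} (h : InUC X w) : NWUC X w :=
  fun _ hXE _ c => (h c).mono hXE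

lemma exists_MSUC_card_le {G X : Finset (C × C)} {w : C} (hXG : X ⊆ G) (hX : NWUC X w) :
    ∃ Y, MSUC G Y w ∧ Y.card ≤ X.card := by
  classical
  have hXmem : X ∈ X.powerset.filter (NWUC · w) := mem_filter.2 ⟨mem_powerset_self X, hX⟩
  obtain ⟨Y, hY, hmin⟩ := (X.powerset.filter (NWUC · w)).exists_min_image card ⟨X, hXmem⟩
  rw [mem_filter, mem_powerset] at hY
  refine ⟨Y, ⟨hY.1.trans hXG, hY.2, fun Z hZY hZ => ?_⟩, hmin X hXmem⟩
  have hZmem : Z ∈ X.powerset.filter (NWUC · w) :=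
    mem_filter.2 ⟨mem_powerset.2 (hZY.subset.trans hY.1), hZ⟩
  exact (card_lt_card hZY).not_ge (hmin Z hZmem)

section Finite

variable [Fintype C] [DecidableEq C]

lemma exists_injective_nat_forall_le (v : C) : ∃ r : C → ℕ, Injective r ∧ ∀ x, r v ≤ r x := by
  refine ⟨fun x => if x = v then 0 else Fintype.equivFin C x + 1, fun x y hxy => ?_,
    fun x => by simp⟩
  by_cases hx : x = v <;> by_cases hy : y = v <;> simp only [hx, hy, if_true, if_false] at hxy
  · exact hx.trans hy.symm
  · omega
  · omega
  · exact (Fintype.equivFin C).injective (Fin.ext (by omega))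

def rankCompletion (X : Finset (C × C)) (r : C → ℕ) : Finset (C × C) :=
  X ∪ univ.filter fun p => (p.2, p.1) ∉ X ∧ r p.1 < r p.2

lemma subset_rankCompletion (X : Finset (C × C)) (r : C → ℕ) : X ⊆ rankCompletion X r :=
  subset_union_left

lemma isCompleteT_rankCompletion {X : Finset (C × C)} (hX : ∀ x y, (x, y) ∈ X → (y, x) ∉ X)
    {r : C → ℕ} (hr : Injective r) : IsCompleteT (rankCompletion X r) := by
  refine ⟨fun x y hxy hyx => ?_, fun x y hne => ?_⟩
  · simp only [rankCompletion, mem_union, mem_filter, mem_univ, true_and] at hxy hyx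
    rcases hxy with hxy | ⟨hyx', hlt⟩ <;> rcases hyx with hyx | ⟨hxy', hlt'⟩
    · exact hX x y hxy hyx
    · exact hxy' hxy
    · exact hyx' hyx
    · omega
  · by_cases hxy : (x, y) ∈ X
    · exact Or.inl (mem_union_left _ hxy)
    by_cases hyx : (y, x) ∈ X
    · exact Or.inr (mem_union_left _ hyx)
    rcases (hr.ne hne).lt_or_gt with hlt | hlt
    · exact Or.inl (mem_union_right _ (by simp [hyx, hlt]))
    · exact Or.inr (mem_union_right _ (by simp [hxy, hlt]))

lemma lt_of_mem_rankCompletion {X : Finset (C × C)} {r : C → ℕ} {u v : C}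
    (h : (u, v) ∈ rankCompletion X r) (hX : (u, v) ∉ X) : r u < r v := by
  simp only [rankCompletion, mem_union, mem_filter, mem_univ, true_and] at h
  exact h.resolve_left hX |>.2

lemma NWUC.exists_mem_of_ne {X : Finset (C × C)} (hX : ∀ x y, (x, y) ∈ X → (y, x) ∉ X)
    {w : C} (h : NWUC X w) {v : C} (hv : v ≠ w) : ∃ u, (u, v) ∈ X := by
  by_contra! hnone
  obtain ⟨r, hr, hmin⟩ := exists_injective_nat_forall_le v
  have hsource : ∀ u, (u, v) ∉ rankCompletion X r := fun u hu =>
    (lt_of_mem_rankCompletion hu (hnone u)).not_ge (hmin u)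
  rcases h _ (subset_rankCompletion X r) (isCompleteT_rankCompletion hX hr) v with
    hwv | hwv | ⟨z, -, hzv⟩
  · exact hv hwv.symm
  · exact hsource w hwv
  · exact hsource z hzv

lemma NWUC.card_sub_one_le {X : Finset (C × C)} (hX : ∀ x y, (x, y) ∈ X → (y, x) ∉ X)
    {w : C} (h : NWUC X w) : Fintype.card C - 1 ≤ X.card :=
  calc Fintype.card C - 1 = (univ.erase w).card := by rw [card_erase_of_mem (mem_univ w), card_univ]
    _ ≤ (X.image Prod.snd).card := card_le_card fun v hv => by
        obtain ⟨u, hu⟩ := h.exists_mem_of_ne hX (ne_of_mem_erase hv)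
        exact mem_image_of_mem Prod.snd hu
    _ ≤ X.card := card_image_le

open Classical in
noncomputable def twoStepParent (G : Finset (C × C)) (w c : C) : C :=
  if (w, c) ∈ G then w else if h : ∃ z, (w, z) ∈ G ∧ (z, c) ∈ G then h.choose else w

noncomputable def twoStepTree (G : Finset (C × C)) (w : C) : Finset (C × C) :=
  (univ.erase w).image fun c => (twoStepParent G w c, c)

variable {G : Finset (C × C)} {w c : C}

lemma twoStepParent_of_mem (h : (w, c) ∈ G) : twoStepParent G w c = w := if_pos h

lemma InUC.twoStepParent_spec (hw : InUC G w) (hc : c ≠ w) (hwc : (w, c) ∉ G) :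
    (w, twoStepParent G w c) ∈ G ∧ (twoStepParent G w c, c) ∈ G := by
  have hpath : ∃ z, (w, z) ∈ G ∧ (z, c) ∈ G := by
    rcases hw c with hwc' | hwc' | hpath
    · exact absurd hwc'.symm hc
    · exact absurd hwc' hwc
    · exact hpath
  rw [twoStepParent, if_neg hwc, dif_pos hpath]
  exact hpath.choose_spec

lemma mem_twoStepTree (hc : c ≠ w) : (twoStepParent G w c, c) ∈ twoStepTree G w :=
  mem_image_of_mem _ (mem_erase.2 ⟨hc, mem_univ c⟩)

lemma card_twoStepTree_le : (twoStepTree G w).card ≤ Fintype.card C - 1 :=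
  card_image_le.trans_eq (by rw [card_erase_of_mem (mem_univ w), card_univ])

lemma InUC.twoStepTree_subset (hw : InUC G w) : twoStepTree G w ⊆ G := by
  intro p hp
  obtain ⟨c, hc, rfl⟩ := mem_image.1 hp
  by_cases hwc : (w, c) ∈ G
  · rwa [twoStepParent_of_mem hwc]
  · exact (hw.twoStepParent_spec (ne_of_mem_erase hc) hwc).2

lemma InUC.inUC_twoStepTree (hw : InUC G w) : InUC (twoStepTree G w) w := by
  intro c
  by_cases hcw : c = w
  · exact Or.inl hcw.symm
  by_cases hwc : (w, c) ∈ G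
  · have hmem := mem_twoStepTree (G := G) hcw
    rw [twoStepParent_of_mem hwc] at hmem
    exact Or.inr (Or.inl hmem)
  obtain ⟨hwz, hzc⟩ := hw.twoStepParent_spec hcw hwc
  have hzw : twoStepParent G w c ≠ w := fun h => hwc (h ▸ hzc)
  have hmem := mem_twoStepTree (G := G) hzw
  rw [twoStepParent_of_mem hwz] at hmem
  exact Or.inr (Or.inr ⟨_, hmem, mem_twoStepTree hcw⟩)

end Finite

end

theorem stmt3_general {C : Type*} [Fintype C] [DecidableEq C]
    (m : ℕ) (hm : Fintype.card C = m)
    (G : Finset (C × C)) (hG : IsCompleteT G) (w : C) (hw : InUC G w)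
    (X : Finset (C × C)) (hX : SMSUC G X w) :
    X.card = m - 1 := by
  obtain ⟨⟨hXG, hXNW, -⟩, hXsmallest⟩ := hX
  have hXasymm : ∀ x y, (x, y) ∈ X → (y, x) ∉ X := fun x y h h' => hG.1 x y (hXG h) (hXG h')
  obtain ⟨Y, hY, hYcard⟩ := exists_MSUC_card_le hw.twoStepTree_subset hw.inUC_twoStepTree.nwuc
  subst hm
  refine le_antisymm ?_ (hXNW.card_sub_one_le hXasymm)
  calc X.card ≤ Y.card := hXsmallest Y hY
    _ ≤ (twoStepTree G w).card := hYcard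
    _ ≤ Fintype.card C - 1 := card_twoStepTree_le

/-- Every smallest minimal support for an uncovered-set winner of a complete
tournament on `m` candidates has exactly `m - 1` edges. -/
theorem stmt3 {C : Type*} [Fintype C] [DecidableEq C] [Nonempty C]
    (m : ℕ) (hm : Fintype.card C = m)
    (G : Finset (C × C)) (hG : IsCompleteT G) (w : C) (hw : InUC G w)
    (X : Finset (C × C)) (hX : SMSUC G X w) :
    X.card = m - 1 :=
  stmt3_general m hm G hG w hw X hX
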